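/- Let F be a reduced monomial translation-dilation invariant system of dimension k with index set Λ and density γ, and let r ≥ 1 be an integer. Let K be a tuple of positive reals, set Q_i = ⌈2rK_i⌉ for each i, and let τ be a tuple of positive reals with τ_i ≤ K_i for each i. Then for any x^{(1)},…,x^{(2r)} ∈ ℤ^k with 0 < x^{(j)}_i ≤ τ_i for all i,j, one has Σ_α e(Σ_{j=1}^{2r} (−1)^j θ_α(x^{(j)})) = Q^γ if Σ_{j=1}^{2r} (−1)^j (x^{(j)})^β = 0 for every β ∈ Λ, and Σ_α e(Σ_{j=1}^{2r} (−1)^j θ_α(x^{(j)})) = 0 otherwise; here α ranges over all indices of the dissection with parameter Q, and e(t) = e^{2πi t}. -/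

import Mathlib

/-!
Write `S_β = Σⱼ (-1)ʲ (x⁽ʲ⁾)^β`. The phase `Σⱼ (-1)ʲ θ_α(x⁽ʲ⁾)` equals `Σ_β c_β S_β / Q^β`, so the
sum over `α` factors over `β ∈ Λ₀` into complete sums `Σ_{c < Q^β} e(c S_β / Q^β)`, each equal to
`Q^β` or `0` according as `Q^β ∣ S_β` or not. Since `2r x⁽ʲ⁾ᵢ ≤ Qᵢ`, an alternating sum of `2r`
monomials `(x⁽ʲ⁾)^β` with `β ≠ 0` has `|S_β| < Q^β`, so `Q^β ∣ S_β` only when `S_β = 0`.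
-/

open scoped BigOperators

/-- `e(t) = e^{2πit}`. -/
noncomputable def e (t : ℝ) : ℂ := Complex.exp (2 * Real.pi * Complex.I * t)

/-- `Λ` is the index set of a reduced monomial translation-dilation invariant system of
dimension `k`. -/
def IsTDI {k : ℕ} (Λ : Finset (Fin k →₀ ℕ)) : Prop :=
  (0 : Fin k →₀ ℕ) ∉ Λ ∧
  (∀ β ∈ Λ, ∀ α : Fin k →₀ ℕ, α ≠ 0 → α ≤ β → α ∈ Λ) ∧
  (∀ i : Fin k, ∃ β ∈ Λ, 1 ≤ β i)

/-- The polynomial `θ_α(x) = Σ_{β ∈ Λ₀} c_β Q^{−β} x^β` attached to an index `α = (c_β)`. -/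
noncomputable def theta {k : ℕ} (Λ₀ : Finset (Fin k →₀ ℕ)) (Q : Fin k → ℕ)
    (c : {β // β ∈ Λ₀} → ℕ) (x : Fin k → ℤ) : ℝ :=
  ∑ β : {β // β ∈ Λ₀},
    (c β : ℝ) / (∏ i, (Q i : ℝ) ^ (β.1 i)) * ∏ i, (x i : ℝ) ^ (β.1 i)

/-- The finite set of indices `α` of the dissection with parameter `Q`. -/
noncomputable def indexFinset {k : ℕ} (Λ₀ : Finset (Fin k →₀ ℕ)) (Q : Fin k → ℕ) :
    Finset ({β // β ∈ Λ₀} → ℕ) :=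
  Fintype.piFinset fun β => Finset.range (∏ i, Q i ^ (β.1 i))

lemma e_sum {ι : Type*} (s : Finset ι) (f : ι → ℝ) : e (∑ i ∈ s, f i) = ∏ i ∈ s, e (f i) := by
  simp only [e, Complex.ofReal_sum, Finset.mul_sum, Complex.exp_sum]

lemma e_eq_exp_pow (c : ℕ) (S : ℤ) (M : ℕ) :
    e (c * S / M) = (Complex.exp (2 * Real.pi * Complex.I / M) ^ S) ^ c := by
  rw [← zpow_natCast, ← zpow_mul, ← Complex.exp_int_mul, e]
  congr 1
  push_cast
  ring

lemma sum_range_e_mul_div (M : ℕ) (S : ℤ) :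
    ∑ c ∈ Finset.range M, e (c * S / M) = if (M : ℤ) ∣ S then (M : ℂ) else 0 := by
  rcases M.eq_zero_or_pos with rfl | hM
  · simp
  have hζ := Complex.isPrimitiveRoot_exp M hM.ne'
  simp only [e_eq_exp_pow]
  split_ifs with hdvd
  · simp [(hζ.zpow_eq_one_iff_dvd S).2 hdvd]
  · have hζS : Complex.exp (2 * Real.pi * Complex.I / M) ^ S ≠ 1 :=
      mt (hζ.zpow_eq_one_iff_dvd S).1 hdvd
    rw [geom_sum_eq hζS, ← zpow_natCast, ← zpow_mul, mul_comm S, zpow_mul, zpow_natCast,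
      hζ.pow_eq_one, one_zpow, sub_self, zero_div]

def multiPow {k : ℕ} (Q : Fin k → ℕ) (β : Fin k →₀ ℕ) : ℕ := ∏ i, Q i ^ β i

def altPowerSum {n k : ℕ} (x : Fin n → Fin k → ℤ) (β : Fin k →₀ ℕ) : ℤ :=
  ∑ j : Fin n, (-1 : ℤ) ^ ((j : ℕ) + 1) * ∏ i, x j i ^ β i

lemma sum_mul_theta {ι : Type*} {k : ℕ} (s : Finset ι) (w : ι → ℝ) (x : ι → Fin k → ℤ)
    (Λ₀ : Finset (Fin k →₀ ℕ)) (Q : Fin k → ℕ) (c : {β // β ∈ Λ₀} → ℕ) :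
    ∑ j ∈ s, w j * theta Λ₀ Q c (x j) =
      ∑ β : {β // β ∈ Λ₀},
        c β * (∑ j ∈ s, w j * ∏ i, (x j i : ℝ) ^ β.1 i) / ∏ i, (Q i : ℝ) ^ β.1 i := by
  simp only [theta, Finset.mul_sum, Finset.sum_div]
  rw [Finset.sum_comm]
  refine Finset.sum_congr rfl fun β _ => Finset.sum_congr rfl fun j _ => ?_
  ring

theorem sum_indexFinset_e_eq_prod_ite_dvd {n k : ℕ} (Λ₀ : Finset (Fin k →₀ ℕ)) (Q : Fin k → ℕ)
    (x : Fin n → Fin k → ℤ) :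
    ∑ c ∈ indexFinset Λ₀ Q,
        e (∑ j : Fin n, (-1 : ℝ) ^ ((j : ℕ) + 1) * theta Λ₀ Q c (x j)) =
      ∏ β : {β // β ∈ Λ₀},
        if (multiPow Q β : ℤ) ∣ altPowerSum x β then (multiPow Q β : ℂ) else 0 := by
  classical
  simp only [← sum_range_e_mul_div, Finset.prod_univ_sum, indexFinset, sum_mul_theta, e_sum]
  refine Finset.sum_congr rfl fun c _ => Finset.prod_congr rfl fun β _ => ?_
  simp [altPowerSum, multiPow]

lemma abs_sum_neg_one_pow_mul_lt {R : Type*} [Ring R] [LinearOrder R] [IsStrictOrderedRing R]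
    {n : ℕ} (hn : 2 ≤ n) (t : Fin n → R) (ht : ∀ j, 0 < t j) :
    |∑ j : Fin n, (-1) ^ ((j : ℕ) + 1) * t j| < ∑ j, t j := by
  have habs : ∀ j : Fin n, |(-1 : R) ^ ((j : ℕ) + 1) * t j| = t j := fun j => by
    rw [abs_mul, abs_pow, abs_neg, abs_one, one_pow, one_mul, abs_of_pos (ht j)]
  rw [abs_lt, ← Finset.sum_neg_distrib]
  constructor
  · refine Finset.sum_lt_sum (fun j _ => (neg_le_neg (habs j).le).trans (neg_abs_le _))
      ⟨⟨1, hn⟩, by simp, ?_⟩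
    simpa using neg_lt_self (ht ⟨1, hn⟩)
  · refine Finset.sum_lt_sum (fun j _ => (le_abs_self _).trans (habs j).le)
      ⟨⟨0, by omega⟩, by simp, ?_⟩
    simpa using neg_lt_self (ht ⟨0, by omega⟩)

lemma mul_prod_pow_le_prod_mul_pow {R : Type*} [CommSemiring R] [PartialOrder R] [IsOrderedRing R]
    {k : ℕ} {a : R} (ha : 1 ≤ a) {y : Fin k → R} (hy : ∀ i, 0 ≤ y i) {β : Fin k →₀ ℕ}
    (hβ : β ≠ 0) : a * ∏ i, y i ^ β i ≤ ∏ i, (a * y i) ^ β i := by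
  have hdeg : ∑ i, β i ≠ 0 := by
    simpa [Finset.sum_eq_zero_iff, Finsupp.ext_iff] using hβ
  simp only [mul_pow, Finset.prod_mul_distrib, Finset.prod_pow_eq_pow_sum]
  exact mul_le_mul_of_nonneg_right (le_self_pow₀ ha hdeg)
    (Finset.prod_nonneg fun i _ => pow_nonneg (hy i) _)

lemma abs_altPowerSum_lt_multiPow {n k : ℕ} (hn : 2 ≤ n) {x : Fin n → Fin k → ℤ}
    {Q : Fin k → ℕ} (hx : ∀ j i, 0 < x j i ∧ n * x j i ≤ Q i) {β : Fin k →₀ ℕ} (hβ : β ≠ 0) :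
    |altPowerSum x β| < multiPow Q β := by
  have hpos : ∀ j, 0 < ∏ i, x j i ^ β i := fun j =>
    Finset.prod_pos fun i _ => pow_pos (hx j i).1 _
  have hterm : ∀ j, (n : ℤ) * ∏ i, x j i ^ β i ≤ multiPow Q β := fun j =>
    calc (n : ℤ) * ∏ i, x j i ^ β i
        ≤ ∏ i, (n * x j i) ^ β i :=
          mul_prod_pow_le_prod_mul_pow (by omega) (fun i => (hx j i).1.le) hβ
      _ ≤ ∏ i, (Q i : ℤ) ^ β i := Finset.prod_le_prod
          (fun i _ => pow_nonneg (by nlinarith [hx j i]) _)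
          fun i _ => pow_le_pow_left₀ (by nlinarith [hx j i]) (hx j i).2 _
      _ = multiPow Q β := by simp [multiPow]
  have hsum : ∑ j, ∏ i, x j i ^ β i ≤ multiPow Q β := by
    have h := Finset.sum_le_card_nsmul Finset.univ _ _ fun j _ => hterm j
    rw [← Finset.mul_sum, Finset.card_univ, Fintype.card_fin, nsmul_eq_mul] at h
    exact le_of_mul_le_mul_left h (by omega)
  exact (abs_sum_neg_one_pow_mul_lt hn _ hpos).trans_le hsum

lemma prod_multiPow {k : ℕ} (Q : Fin k → ℕ) (s : Finset (Fin k →₀ ℕ)) :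
    ∏ β : {β // β ∈ s}, multiPow Q β = ∏ i, Q i ^ ∑ β ∈ s, β i := by
  simp only [multiPow, Finset.prod_coe_sort s (fun β => ∏ i, Q i ^ β i)]
  rw [Finset.prod_comm]
  simp only [Finset.prod_pow_eq_pow_sum]

theorem stmt_15_general (k r : ℕ) (hr : 1 ≤ r)
    (Λ : Finset (Fin k →₀ ℕ)) (hΛ : IsTDI Λ)
    (K τ : Fin k → ℝ) (hτ : ∀ i, 0 < τ i ∧ τ i ≤ K i)
    (Q : Fin k → ℕ) (hQ : ∀ i, Q i = ⌈(2 * r : ℝ) * K i⌉₊)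
    (x : Fin (2 * r) → Fin k → ℤ) (hx : ∀ j i, 0 < x j i ∧ ((x j i : ℝ)) ≤ τ i) :
    ((∀ β ∈ Λ, ∑ j : Fin (2 * r), (-1 : ℤ) ^ ((j : ℕ) + 1) * ∏ i, (x j i) ^ (β i) = 0) →
      ∑ c ∈ indexFinset (insert 0 Λ) Q,
          e (∑ j : Fin (2 * r), (-1 : ℝ) ^ ((j : ℕ) + 1) * theta (insert 0 Λ) Q c (x j)) =
        ∏ i, (Q i : ℂ) ^ (∑ β ∈ Λ, β i)) ∧
    ((¬ ∀ β ∈ Λ, ∑ j : Fin (2 * r), (-1 : ℤ) ^ ((j : ℕ) + 1) * ∏ i, (x j i) ^ (β i) = 0) →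
      ∑ c ∈ indexFinset (insert 0 Λ) Q,
          e (∑ j : Fin (2 * r), (-1 : ℝ) ^ ((j : ℕ) + 1) * theta (insert 0 Λ) Q c (x j)) =
        0) := by
  classical
  have hxQ : ∀ j i, 0 < x j i ∧ ((2 * r : ℕ) : ℤ) * x j i ≤ Q i := fun j i => by
    refine ⟨(hx j i).1, ?_⟩
    have : (2 * r : ℝ) * x j i ≤ Q i := calc
      (2 * r : ℝ) * x j i ≤ 2 * r * K i := by gcongr; exact (hx j i).2.trans (hτ i).2
      _ ≤ Q i := hQ i ▸ Nat.le_ceil _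
    exact_mod_cast this
  rw [sum_indexFinset_e_eq_prod_ite_dvd]
  refine ⟨fun hS => ?_, fun hS => ?_⟩
  · have hdvd : ∀ β : {β // β ∈ insert 0 Λ}, (multiPow Q β : ℤ) ∣ altPowerSum x β := by
      rintro ⟨β, hβ⟩
      rcases Finset.mem_insert.mp hβ with rfl | hβ
      · simp [multiPow]
      · simp [altPowerSum, hS β hβ]
    simp only [hdvd, if_true]
    have hγ : ∀ i, ∑ β ∈ insert 0 Λ, β i = ∑ β ∈ Λ, β i := fun i =>
      Finset.sum_insert_of_eq_zero_if_notMem (by simp)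
    rw [← Nat.cast_prod, prod_multiPow, Nat.cast_prod]
    simp only [hγ, Nat.cast_pow]
  · push Not at hS
    obtain ⟨β, hβ, hSβ⟩ := hS
    have hβ0 : β ≠ 0 := ne_of_mem_of_not_mem hβ hΛ.1
    refine Finset.prod_eq_zero (Finset.mem_univ ⟨β, Finset.mem_insert_of_mem hβ⟩) (if_neg ?_)
    exact fun hdvd => hSβ (Int.eq_zero_of_abs_lt_dvd hdvd
      (abs_altPowerSum_lt_multiPow (by omega) hxQ hβ0))

theorem stmt_15 (k r : ℕ) (hk : 0 < k) (hr : 1 ≤ r)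
    (Λ : Finset (Fin k →₀ ℕ)) (hΛ : IsTDI Λ)
    (K τ : Fin k → ℝ) (hK : ∀ i, 0 < K i) (hτ : ∀ i, 0 < τ i ∧ τ i ≤ K i)
    (Q : Fin k → ℕ) (hQ : ∀ i, Q i = ⌈(2 * r : ℝ) * K i⌉₊)
    (x : Fin (2 * r) → Fin k → ℤ) (hx : ∀ j i, 0 < x j i ∧ ((x j i : ℝ)) ≤ τ i) :
    ((∀ β ∈ Λ, ∑ j : Fin (2 * r), (-1 : ℤ) ^ ((j : ℕ) + 1) * ∏ i, (x j i) ^ (β i) = 0) →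
      ∑ c ∈ indexFinset (insert 0 Λ) Q,
          e (∑ j : Fin (2 * r), (-1 : ℝ) ^ ((j : ℕ) + 1) * theta (insert 0 Λ) Q c (x j)) =
        ∏ i, (Q i : ℂ) ^ (∑ β ∈ Λ, β i)) ∧
    ((¬ ∀ β ∈ Λ, ∑ j : Fin (2 * r), (-1 : ℤ) ^ ((j : ℕ) + 1) * ∏ i, (x j i) ^ (β i) = 0) →
      ∑ c ∈ indexFinset (insert 0 Λ) Q,
          e (∑ j : Fin (2 * r), (-1 : ℝ) ^ ((j : ℕ) + 1) * theta (insert 0 Λ) Q c (x j)) =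
        0) :=
  stmt_15_general k r hr Λ hΛ K τ hτ Q hQ x hx
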